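/- arXiv:1805.10682 — 3 statements merged into one kernel-verified Lean document; each statement's English description precedes it below -/
import Mathlib

section
/- If K ⊆ L is a field extension of infinite degree, and V denotes the L-vector space L^ℕ of all sequences in L, then the K-subspace K^ℕ ⊆ L^ℕ does not generate V as an L-vector space (its L-span is a proper subspace of L^ℕ). -/
/-!
An `L`-linear combination `∑ aᵢ • gᵢ` of `K`-valued sequences takes all its values in the
`K`-span of the finitely many coefficients `aᵢ`. When `[L : K]` is infinite, a sequence of
`K`-linearly independent elements of `L` has no such finite-dimensional home, so it is not in
the span.
-/

theorem Module.exists_linearIndependent_nat_of_not_finite {K V : Type*} [DivisionRing K]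
    [AddCommGroup V] [Module K V] (h : ¬ Module.Finite K V) :
    ∃ x : ℕ → V, LinearIndependent K x := by
  let b := Module.Basis.ofVectorSpace K V
  have : Infinite (Module.Basis.ofVectorSpaceIndex K V) :=
    not_finite_iff_infinite.mp fun _ ↦ h (Module.Finite.of_basis b)
  let e := Infinite.natEmbedding (Module.Basis.ofVectorSpaceIndex K V)
  exact ⟨b ∘ e, b.linearIndependent.comp e e.injective⟩

theorem exists_finite_range_subset_span_of_mem_span_algebraMap {K L ι : Type*} [CommSemiring K]
    [CommSemiring L] [Algebra K L] {v : ι → L}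
    (hv : v ∈ Submodule.span L {w : ι → L | ∀ n, ∃ c : K, w n = algebraMap K L c}) :
    ∃ s : Set L, s.Finite ∧ Set.range v ⊆ Submodule.span K s := by
  obtain ⟨m, a, g, rfl⟩ := Submodule.mem_span_set'.mp hv
  refine ⟨Set.range a, Set.finite_range a, ?_⟩
  rintro _ ⟨n, rfl⟩
  simp only [Finset.sum_apply, Pi.smul_apply, smul_eq_mul]
  refine Submodule.sum_mem _ fun i _ ↦ ?_
  obtain ⟨c, hc⟩ := (g i).2 n
  rw [hc, mul_comm, ← Algebra.smul_def]
  exact Submodule.smul_mem _ c (Submodule.subset_span ⟨i, rfl⟩)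

/-- If `K ⊆ L` is a field extension of infinite degree, then the `L`-span of the set
`K^ℕ ⊆ L^ℕ` of sequences with entries in `K` is a proper subspace of `L^ℕ`. -/
theorem stmt2 (K L : Type) [Field K] [Field L] [Algebra K L]
    (h : ¬ FiniteDimensional K L) :
    Submodule.span L {v : ℕ → L | ∀ n, ∃ c : K, v n = algebraMap K L c} ≠ ⊤ := by
  intro htop
  obtain ⟨x, hx⟩ := Module.exists_linearIndependent_nat_of_not_finite h
  obtain ⟨s, hs, hxs⟩ := exists_finite_range_subset_span_of_mem_span_algebraMap
    (K := K) (htop ▸ Submodule.mem_top : x ∈ _)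
  have := hs.to_subtype
  have : Finite ℕ := hx.finite_of_le_span_finite x s hxs
  exact not_finite ℕ
end

section
/- A coproduct (direct sum) of a family of α-grounded objects of C, computed pointwise, is again α-grounded. Hence for any set of grounded objects, all α-grounded for a common α, their coproduct exists in the category G of grounded objects and agrees with the coproduct in C. -/
set_option linter.unusedVariables false
open scoped DirectSum

structure ChainObj {J : Type} [LinearOrder J] (k : J → Type) [∀ i, Field (k i)]
    (f : ∀ i j, i ≤ j → k i →+* k j) where
  V : J → Type
  [acg : ∀ i, AddCommGroup (V i)]
  [mod : ∀ i, Module (k i) (V i)]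
  t : ∀ i j (h : i ≤ j), V i →ₛₗ[f i j h] V j
  t_id : ∀ i (x : V i), t i i le_rfl x = x
  t_comp : ∀ i j l (h₁ : i ≤ j) (h₂ : j ≤ l) (x : V i),
    t j l h₂ (t i j h₁ x) = t i l (h₁.trans h₂) x

attribute [instance] ChainObj.acg ChainObj.mod

variable {J : Type} [LinearOrder J] {k : J → Type} [∀ i, Field (k i)]
  {f : ∀ i j, i ≤ j → k i →+* k j}

@[ext]
structure ChainHom (V W : ChainObj k f) where
  app : ∀ i, V.V i →ₗ[k i] W.V i
  comm : ∀ i j (h : i ≤ j) (x : V.V i), W.t i j h (app i x) = app j (V.t i j h x)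

def ChainHom.comp {U V W : ChainObj k f} (g : ChainHom V W) (h : ChainHom U V) :
    ChainHom U W where
  app i := (g.app i).comp (h.app i)
  comm i j hij x := by simp [g.comm, h.comm]

def ChainHom.id (V : ChainObj k f) : ChainHom V V where
  app i := LinearMap.id
  comm i j hij x := rfl

def ChainHom.zero (V W : ChainObj k f) : ChainHom V W where
  app i := 0
  comm i j hij x := by simp

/-- An object `V` is `α`-grounded if for every `β > α` the component `V β` is spanned
over `k β` by the image of the transition map from level `α`. -/
def IsGrounded (α : J) (V : ChainObj k f) : Prop :=
  ∀ β (h : α < β), Submodule.span (k β) (Set.range (V.t α β h.le)) = ⊤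

/-- The pointwise coproduct (direct sum) of a family of objects of `C`. -/
def sumObj {I : Type} (Vf : I → ChainObj k f) : ChainObj k f where
  V i := ⨁ x, (Vf x).V i
  t i j h :=
    { toFun := DFinsupp.mapRange (fun x => (Vf x).t i j h) (fun x => map_zero _)
      map_add' := fun a b => by
        apply DFinsupp.ext (fun y => ?_)
        simp [DFinsupp.mapRange_apply]
      map_smul' := fun c a => by
        apply DFinsupp.ext (fun y => ?_)
        simp [DFinsupp.mapRange_apply, DirectSum.smul_apply, LinearMap.map_smulₛₗ] }
  t_id i x := by
    apply DFinsupp.ext (fun y => ?_)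
    simp [DFinsupp.mapRange_apply, ChainObj.t_id]
  t_comp i j l h₁ h₂ x := by
    apply DFinsupp.ext (fun y => ?_)
    simp [DFinsupp.mapRange_apply, ChainObj.t_comp]

/-- The canonical inclusion of a summand into the pointwise direct sum. -/
def sumIncl {I : Type} [DecidableEq I] (Vf : I → ChainObj k f) (x : I) :
    ChainHom (Vf x) (sumObj Vf) where
  app i := DirectSum.lof (k i) I (fun y => (Vf y).V i) x
  comm i j h v := by
    apply DFinsupp.ext (fun y => ?_)
    change DFinsupp.mapRange (fun x => (Vf x).t i j h) (fun x => map_zero _) (DFinsupp.single (β := fun z => (Vf z).V i) x v) y = DFinsupp.single (β := fun z => (Vf z).V j) x ((Vf x).t i j h v) y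
    rw [DFinsupp.mapRange_apply]
    by_cases hxy : y = x
    · subst hxy; simp
    · simp [DFinsupp.single_eq_of_ne, hxy, Ne.symm hxy]

section Coproduct

open DirectSum

variable {I : Type} (Vf : I → ChainObj k f)

theorem sumObj_t_lof [DecidableEq I] (i j : J) (h : i ≤ j) (x : I) (v : (Vf x).V i) :
    (sumObj Vf).t i j h (lof (k i) I (fun y => (Vf y).V i) x v) =
      lof (k j) I (fun y => (Vf y).V j) x ((Vf x).t i j h v) :=
  (sumIncl Vf x).comm i j h v

theorem IsGrounded.sumObj {α : J} (hVf : ∀ x, IsGrounded α (Vf x)) :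
    IsGrounded α (sumObj Vf) := by
  classical
  intro β hβ
  rw [eq_top_iff]
  rintro v -
  induction v using DirectSum.induction_on with
  | zero => exact zero_mem _
  | add a b ha hb => exact add_mem ha hb
  | of x w =>
    have hw : w ∈ Submodule.span (k β) (Set.range ((Vf x).t α β hβ.le)) :=
      hVf x β hβ ▸ Submodule.mem_top
    have hw' := Submodule.mem_map_of_mem (f := lof (k β) I (fun y => (Vf y).V β) x) hw
    rw [Submodule.map_span, ← Set.range_comp] at hw'
    refine Submodule.span_mono ?_ hw'
    rintro _ ⟨a, rfl⟩
    exact ⟨lof (k α) I (fun y => (Vf y).V α) x a, sumObj_t_lof Vf α β hβ.le x a⟩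

variable {Vf} {T : ChainObj k f} [DecidableEq I]

-- Stated on `⨁` rather than on `sumObj Vf`: through the structure's `acg` field, the zero and
-- addition of `sumObj Vf` are not syntactically those of `⨁`, and `map_zero`/`map_add` miss them.
theorem t_toModule_eq_toModule_mapRange (g : ∀ x, ChainHom (Vf x) T) (i j : J) (h : i ≤ j)
    (v : ⨁ x, (Vf x).V i) :
    T.t i j h (toModule (k i) I (T.V i) (fun x => (g x).app i) v) =
      toModule (k j) I (T.V j) (fun x => (g x).app j)
        (DFinsupp.mapRange (fun x => (Vf x).t i j h) (fun x => map_zero _) v) := by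
  induction v using DirectSum.induction_on with
  | zero => simp only [map_zero, DFinsupp.mapRange_zero]
  | add a b ha hb =>
    rw [map_add, map_add, DFinsupp.mapRange_add _ _ fun x => map_add _, map_add, ha, hb]
  | of x w =>
    rw [← lof_eq_of (k i), toModule_lof, (g x).comm]
    exact (toModule_lof (φ := fun y => (g y).app j) (k j) x _).symm.trans
      (congrArg _ (sumObj_t_lof Vf i j h x w).symm)

def sumDesc (g : ∀ x, ChainHom (Vf x) T) : ChainHom (sumObj Vf) T where
  app i := toModule (k i) I (T.V i) fun x => (g x).app i
  comm := t_toModule_eq_toModule_mapRange g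

theorem sumDesc_comp_sumIncl (g : ∀ x, ChainHom (Vf x) T) (x : I) :
    (sumDesc g).comp (sumIncl Vf x) = g x := by
  ext i w
  exact toModule_lof (φ := fun y => (g y).app i) (k i) x w

theorem ChainHom.sumObj_ext {χ ψ : ChainHom (sumObj Vf) T}
    (h : ∀ x, χ.comp (sumIncl Vf x) = ψ.comp (sumIncl Vf x)) : χ = ψ := by
  ext i : 2
  exact linearMap_ext (k i) fun x => congrArg (ChainHom.app · i) (h x)

end Coproduct

/-- A pointwise coproduct of `α`-grounded objects is `α`-grounded, and (together with
the canonical inclusions) it satisfies the universal property of the coproduct in `C`,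
hence also in the full subcategory `G` of grounded objects. -/
theorem stmt11 {I : Type} [DecidableEq I] (α : J) (Vf : I → ChainObj k f)
    (hVf : ∀ x, IsGrounded α (Vf x)) :
    IsGrounded α (sumObj Vf) ∧
    ∀ (T : ChainObj k f) (g : ∀ x, ChainHom (Vf x) T),
      ∃! χ : ChainHom (sumObj Vf) T, ∀ x, χ.comp (sumIncl Vf x) = g x :=
  ⟨IsGrounded.sumObj Vf hVf, fun _ g => ⟨sumDesc g, sumDesc_comp_sumIncl g,
    fun _ hχ => ChainHom.sumObj_ext fun x => (hχ x).trans (sumDesc_comp_sumIncl g x).symm⟩⟩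
end

section
/- Every Grothendieck category is complete: an abelian category with exact filtered colimits (AB5), all small coproducts, and a generator has all small products (equivalently, all small limits). -/
/-!
A separator of an abelian category is a detector, so subobjects of `X` are determined by which maps
`G ⟶ X` factor through them, and the category is well-powered; since subobjects and quotients
correspond in an abelian category, the opposite category is well-powered too. The special adjoint
functor theorem then makes each constant-diagram functor `C ⥤ (J ⥤ C)`, which preserves colimits,
a left adjoint, and its right adjoint is `lim`.
-/

open CategoryTheory Limits

theorem CategoryTheory.Abelian.wellPowered_opposite_of_isSeparator {C : Type u} [Category.{v} C]
    [Abelian C] {G : C} (hG : IsSeparator G) : WellPowered.{v} Cᵒᵖ :=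
  have : WellPowered.{v} C := wellPowered_of_isDetector G hG.isDetector
  Abelian.wellPowered_opposite

theorem stmt17_general (C : Type u) [Category.{v} C] [Abelian C] [HasColimits C]
    (G : C) (hG : IsSeparator G) :
    HasLimits C :=
  have : WellPowered.{v} Cᵒᵖ := Abelian.wellPowered_opposite_of_isSeparator hG
  hasLimits_of_hasColimits_of_isSeparating hG

/-- Every Grothendieck category is complete: an abelian category with all small
coproducts (hence all colimits), exact filtered colimits (AB5) and a separator has
all small limits. -/
theorem stmt17 (C : Type u) [Category.{v} C] [Abelian C] [HasColimits C]
    [HasFilteredColimits C] [AB5 C] (G : C) (hG : IsSeparator G) :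
    HasLimits C :=
  stmt17_general C G hG
end
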